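/- arXiv:2511.01931 — 3 statements merged into one kernel-verified Lean document; each statement's English description precedes it below -/
import Mathlib

section
/- Let F be a field of characteristic p > 0, let V, W be F-vector spaces of equal finite dimension, and let f : V → W be a p-semilinear map whose image spans W over F. Then ker(f) = 0. -/
/-!
Since `a ↦ a ^ p` is the Frobenius endomorphism of `F`, a `p`-semilinear map is semilinear with
respect to it, and the usual rank–nullity count survives as an inequality: the span of `f(V)` is
spanned by the images of a basis of `V ⧸ ker f`, so it has dimension at most
`dim V - dim ker f`. If that span is `W` and `dim W = dim V`, then `ker f` has dimension `0`.
-/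

/-- A `p`-semilinear map between `F`-vector spaces. -/
def IsPSemilinear (p : ℕ) (F : Type*) [Field F] {V W : Type*}
    [AddCommGroup V] [Module F V] [AddCommGroup W] [Module F W] (f : V → W) : Prop :=
  ∀ (a : F) (x y : V), f (a • x + y) = a ^ p • f x + f y

open Module Submodule

def IsPSemilinear.toSemilinearMap {p : ℕ} {F : Type*} [Field F] [ExpChar F p]
    {V W : Type*} [AddCommGroup V] [Module F V] [AddCommGroup W] [Module F W]
    {f : V → W} (hf : IsPSemilinear p F f) : V →ₛₗ[frobenius F p] W :=
  have map_add : ∀ x y, f (x + y) = f x + f y := fun x y => by simpa using hf 1 x y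
  have map_zero : f 0 = 0 := (AddMonoidHom.mk' f map_add).map_zero
  { toFun := f
    map_add' := map_add
    map_smul' := fun a x => by
      simpa [map_zero, frobenius_def] using hf a x 0 }

section Semilinear

variable {K K₂ V W : Type*} [DivisionRing K] [DivisionRing K₂] {σ : K →+* K₂}
  [AddCommGroup V] [Module K V] [AddCommGroup W] [Module K₂ W]

theorem finrank_span_range_semilinearMap_le [FiniteDimensional K V] (f : V →ₛₗ[σ] W) :
    finrank K₂ (span K₂ (Set.range f)) ≤ finrank K V := by
  let b := Module.finBasis K V
  have h_range : span K₂ (Set.range f) ≤ span K₂ (Set.range (f ∘ b)) := by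
    rw [span_le]
    rintro _ ⟨v, rfl⟩
    rw [← b.sum_repr v, map_sum]
    exact sum_mem fun i _ => by
      rw [map_smulₛₗ]
      exact smul_mem _ _ (subset_span ⟨i, rfl⟩)
  have : FiniteDimensional K₂ (span K₂ (Set.range (f ∘ b))) :=
    FiniteDimensional.span_of_finite K₂ (Set.finite_range _)
  calc finrank K₂ (span K₂ (Set.range f))
      ≤ finrank K₂ (span K₂ (Set.range (f ∘ b))) := finrank_mono h_range
    _ ≤ Fintype.card (Fin (finrank K V)) := finrank_range_le_card _
    _ = finrank K V := Fintype.card_fin _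

theorem finrank_span_range_add_finrank_ker_le [FiniteDimensional K V] (f : V →ₛₗ[σ] W) :
    finrank K₂ (span K₂ (Set.range f)) + finrank K (LinearMap.ker f) ≤ finrank K V := by
  let g := (LinearMap.ker f).liftQ f le_rfl
  have h_range : Set.range g = Set.range f := by
    rw [← (LinearMap.ker f).mkQ_surjective.range_comp g]
    exact congrArg Set.range (congrArg DFunLike.coe ((LinearMap.ker f).liftQ_mkQ f le_rfl))
  rw [← (LinearMap.ker f).finrank_quotient_add_finrank, ← h_range]
  exact Nat.add_le_add_right (finrank_span_range_semilinearMap_le g) _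

end Semilinear

theorem ker_eq_bot_of_span_image_eq_top_general (p : ℕ) [Fact p.Prime]
    (F : Type*) [Field F] [CharP F p]
    {V W : Type*} [AddCommGroup V] [Module F V] [AddCommGroup W] [Module F W]
    [FiniteDimensional F V]
    (hdim : Module.finrank F V = Module.finrank F W)
    (f : V → W) (hf : IsPSemilinear p F f)
    (hspan : Submodule.span F (Set.range f) = ⊤) :
    ∀ x : V, f x = 0 → x = 0 := by
  intro x hx
  let g := hf.toSemilinearMap
  have h_count := finrank_span_range_add_finrank_ker_le g
  have h_ker : LinearMap.ker g = ⊥ := by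
    rw [← finrank_eq_zero]
    change finrank F (span F (Set.range f)) + _ ≤ _ at h_count
    rw [hspan, finrank_top] at h_count
    omega
  exact (mem_bot F).mp (h_ker ▸ LinearMap.mem_ker.mpr hx)

/-- If `V, W` are `F`-vector spaces of equal finite dimension over a field of
characteristic `p > 0` and `f : V → W` is a `p`-semilinear map whose image spans `W` over `F`,
then `ker f = 0`. -/
theorem ker_eq_bot_of_span_image_eq_top (p : ℕ) [Fact p.Prime]
    (F : Type*) [Field F] [CharP F p]
    {V W : Type*} [AddCommGroup V] [Module F V] [AddCommGroup W] [Module F W]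
    [FiniteDimensional F V] [FiniteDimensional F W]
    (hdim : Module.finrank F V = Module.finrank F W)
    (f : V → W) (hf : IsPSemilinear p F f)
    (hspan : Submodule.span F (Set.range f) = ⊤) :
    ∀ x : V, f x = 0 → x = 0 :=
  ker_eq_bot_of_span_image_eq_top_general p F hdim f hf hspan
end

section
/- Let F be a field of characteristic p > 0, V a finite-dimensional F-vector space, and f : V → V a p-semilinear map. Then the F-linear span of f(V) equals V if and only if for every v ∈ V there exist α_1, ..., α_n ∈ F with v = Σ_{i=1}^n α_i f^i(v). -/
/-!
Write `S(U)` for the span of `f '' U`. Since `f` is additive and twists scalars by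
`a ↦ a ^ p`, `S(span s) = S(s)`, so `dim S(U) ≤ dim U`. If `S(V) = V`, then splitting
`V = U ⊕ W` gives `dim V ≤ dim S(U) + dim S(W) ≤ dim S(U) + dim W`, hence `dim U ≤ dim S(U)`.
Applied to `U = span {fᵏ v | k ≥ 0}`, for which `S(U) = span {fᵏ⁺¹ v | k ≥ 0} ≤ U`, this
forces equality, so `v` lies in the span of its proper iterates. The converse is immediate.
-/

open Module Submodule

theorem Submodule.mem_span_range_nat_iff {R M : Type*} [Semiring R] [AddCommMonoid M]
    [Module R M] {g : ℕ → M} {x : M} :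
    x ∈ span R (Set.range g) ↔ ∃ (n : ℕ) (α : Fin n → R), x = ∑ i : Fin n, α i • g i := by
  constructor
  · rw [Finsupp.mem_span_range_iff_exists_finsupp]
    rintro ⟨c, rfl⟩
    obtain ⟨n, hn⟩ := c.support.exists_nat_subset_range
    refine ⟨n, fun i => c i, ?_⟩
    rw [Finsupp.sum_of_support_subset c hn (fun i a => a • g i) (fun _ _ => zero_smul R _),
      Fin.sum_univ_eq_sum_range (fun i => c i • g i)]
  · rintro ⟨n, α, rfl⟩
    exact sum_mem fun i _ => smul_mem _ _ (subset_span ⟨i, rfl⟩)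

namespace IsPSemilinear

variable {p : ℕ} {F V : Type*} [Field F] [AddCommGroup V] [Module F V] {f : V → V}

theorem map_zero (hf : IsPSemilinear p F f) : f 0 = 0 := by
  simpa using hf 1 0 0

theorem map_add (hf : IsPSemilinear p F f) (x y : V) : f (x + y) = f x + f y := by
  simpa using hf 1 x y

theorem map_smul (hf : IsPSemilinear p F f) (a : F) (x : V) : f (a • x) = a ^ p • f x := by
  simpa [hf.map_zero] using hf a x 0

theorem span_image_span (hf : IsPSemilinear p F f) (s : Set V) :
    span F (f '' span F s) = span F (f '' s) := by
  refine le_antisymm (span_le.2 ?_) (span_mono (Set.image_mono subset_span))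
  rintro _ ⟨x, hx, rfl⟩
  induction hx using span_induction with
  | mem y hy => exact subset_span ⟨y, hy, rfl⟩
  | zero => simp [hf.map_zero]
  | add y z _ _ hy hz => simpa [hf.map_add] using add_mem hy hz
  | smul a y _ hy => simpa [hf.map_smul] using smul_mem _ _ hy

theorem finrank_span_image_le (hf : IsPSemilinear p F f) (U : Submodule F V)
    [FiniteDimensional F U] : finrank F (span F (f '' U)) ≤ finrank F U := by
  let b := finBasis F U
  have hU : span F (Set.range ((↑) ∘ b : Fin _ → V)) = U := by
    rw [Set.range_comp, ← U.coe_subtype, ← map_span, b.span_eq, Submodule.map_top,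
      range_subtype]
  have hfU : span F (f '' U) = span F (Set.range (f ∘ (↑) ∘ b)) := by
    rw [Set.range_comp f, ← hf.span_image_span (Set.range _), hU]
  calc finrank F (span F (f '' U))
      = finrank F (span F (Set.range (f ∘ (↑) ∘ b))) := by rw [hfU]
    _ ≤ Fintype.card (Fin (finrank F U)) := finrank_range_le_card _
    _ = finrank F U := Fintype.card_fin _

theorem finrank_le_finrank_span_image [FiniteDimensional F V] (hf : IsPSemilinear p F f)
    (htop : span F (Set.range f) = ⊤) (U : Submodule F V) :
    finrank F U ≤ finrank F (span F (f '' U)) := by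
  obtain ⟨W, hUW⟩ := U.exists_isCompl
  have hsup : span F (f '' U) ⊔ span F (f '' W) = ⊤ := by
    rw [← span_union, ← Set.image_union, ← hf.span_image_span, span_union, span_eq, span_eq,
      hUW.sup_eq_top, top_coe, Set.image_univ, htop]
  have := finrank_add_le_finrank_add_finrank (span F (f '' U)) (span F (f '' W))
  rw [hsup, finrank_top, ← finrank_add_eq_of_isCompl hUW] at this
  linarith [hf.finrank_span_image_le W]

theorem mem_span_range_iterate_succ [FiniteDimensional F V] (hf : IsPSemilinear p F f)
    (htop : span F (Set.range f) = ⊤) (v : V) :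
    v ∈ span F (Set.range fun k => f^[k + 1] v) := by
  set U := span F (Set.range fun k => f^[k] v)
  have hfU : span F (f '' U) = span F (Set.range fun k => f^[k + 1] v) := by
    simp only [U, hf.span_image_span, ← Set.range_comp, Function.comp_def,
      Function.iterate_succ_apply']
  have hle : span F (Set.range fun k => f^[k + 1] v) ≤ U :=
    span_mono (by rintro _ ⟨k, rfl⟩; exact ⟨k + 1, rfl⟩)
  have hrank := hf.finrank_le_finrank_span_image htop U
  rw [hfU] at hrank
  rw [eq_of_le_of_finrank_le hle hrank]
  exact subset_span ⟨0, rfl⟩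

end IsPSemilinear

theorem span_image_eq_top_iff_general (p : ℕ)
    (F : Type*) [Field F]
    {V : Type*} [AddCommGroup V] [Module F V] [FiniteDimensional F V]
    (f : V → V) (hf : IsPSemilinear p F f) :
    Submodule.span F (Set.range f) = ⊤ ↔
      ∀ v : V, ∃ (n : ℕ) (α : Fin n → F), v = ∑ i : Fin n, α i • f^[(i : ℕ) + 1] v := by
  refine ⟨fun htop v => mem_span_range_nat_iff.1 (hf.mem_span_range_iterate_succ htop v),
    fun h => eq_top_iff.2 fun v _ => ?_⟩
  have hiter : Set.range (fun k => f^[k + 1] v) ⊆ Set.range f := by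
    rintro _ ⟨k, rfl⟩
    exact ⟨f^[k] v, (Function.iterate_succ_apply' f k v).symm⟩
  exact span_mono hiter (mem_span_range_nat_iff.2 (h v))

/-- For a `p`-semilinear map `f : V → V` on a finite-dimensional vector space
over a field of characteristic `p > 0`, the `F`-linear span of the image of `f` is all of `V`
if and only if every `v ∈ V` is an `F`-linear combination of the iterates `f v, f² v, …, fⁿ v`. -/
theorem span_image_eq_top_iff (p : ℕ) [Fact p.Prime]
    (F : Type*) [Field F] [CharP F p]
    {V : Type*} [AddCommGroup V] [Module F V] [FiniteDimensional F V]
    (f : V → V) (hf : IsPSemilinear p F f) :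
    Submodule.span F (Set.range f) = ⊤ ↔
      ∀ v : V, ∃ (n : ℕ) (α : Fin n → F), v = ∑ i : Fin n, α i • f^[(i : ℕ) + 1] v :=
  span_image_eq_top_iff_general p F f hf
end

section
/- In a restricted Lie algebra (L, [p]) over a field of characteristic p > 0, if x and y are semisimple elements with [x, y] = 0, then x + y is semisimple. -/
open scoped TensorProduct

/-- Iterated adjoint action: `adIter z n w = (ad z)^n w`. -/
def adIter {L : Type*} [LieRing L] (z : L) : ℕ → L → L
  | 0, w => w
  | n+1, w => ⁅z, adIter z n w⁆

/-- `pm` is a `p`-mapping on the Lie algebra `L` over `F`. -/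
structure IsPMap (p : ℕ) (F : Type*) [Field F] (L : Type*) [LieRing L] [LieAlgebra F L]
    (pm : L → L) : Prop where
  ad_pow : ∀ a x : L, ⁅pm a, x⁆ = adIter a p x
  smul_pow : ∀ (c : F) (a : L), pm (c • a) = c ^ p • pm a
  add_pow : ∀ a b : L, ∃ s : Fin (p - 1) → L,
    adIter ((Polynomial.X : Polynomial F) ⊗ₜ[F] a + (1 : Polynomial F) ⊗ₜ[F] b) (p - 1)
        ((1 : Polynomial F) ⊗ₜ[F] a)
      = (∑ j : Fin (p - 1), ((j : ℕ) + 1) •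
          (((Polynomial.X : Polynomial F) ^ (j : ℕ)) ⊗ₜ[F] s j)) ∧
    pm (a + b) = pm a + pm b + ∑ j : Fin (p - 1), s j

/-- `H` is a `p`-subalgebra w.r.t. the map `pm`. -/
def IsPSubalgebra (F : Type*) [Field F] {L : Type*} [LieRing L] [LieAlgebra F L]
    (pm : L → L) (H : LieSubalgebra F L) : Prop :=
  ∀ x ∈ H, pm x ∈ H

/-- The `p`-subalgebra generated by a set `S`. -/
def pSpan (F : Type*) [Field F] {L : Type*} [LieRing L] [LieAlgebra F L]
    (pm : L → L) (S : Set L) : LieSubalgebra F L :=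
  sInf {H : LieSubalgebra F L | IsPSubalgebra F pm H ∧ S ⊆ H}

/-- An element `x` is semisimple if it lies in the `p`-subalgebra generated by `pm x`. -/
def IsSemisimpleElt (F : Type*) [Field F] {L : Type*} [LieRing L] [LieAlgebra F L]
    (pm : L → L) (x : L) : Prop :=
  x ∈ pSpan F pm {pm x}

/-- An element is `p`-nilpotent if some iterate of the `p`-map kills it. -/
def IsPNilpotentElt {L : Type*} (pm : L → L) [Zero L] (x : L) : Prop :=
  ∃ n : ℕ, pm^[n] x = 0

/-!
Commuting elements have commuting `p`-th powers, and on commuting elements the `p`-map is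
additive: the correction terms `s_j` of Jacobson's formula are the coefficients of
`ad (X ⊗ a + 1 ⊗ b)^(p-1) (1 ⊗ a) = 0`, scaled by the units `j + 1`. So on the span `A` of the
`p`-powers of `x` and `y` the `p`-map is a Frobenius-semilinear endomorphism `φ`, and an element
`z` is semisimple iff `z ∈ span {φ z, φ² z, …}`.

If `u` and `v` are such vectors, their iterates span a finite-dimensional `φ`-stable `W`
with `W ≤ span (φ W)`. On a finite-dimensional space whose image under `φ` spans, every `w`
lies in `Z = span {φ w, φ² w, …}`: `φ` maps `K = φ⁻¹ Z ⊇ Z ∋ w` into `Z`, so the map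
`W / K → W / Z` induced by `φ` has spanning range, which forces `dim Z ≥ dim K`, i.e. `Z = K`.
-/

open Submodule Set

section Semiring

variable {R M : Type*} [Semiring R] [AddCommMonoid M] [Module R M] {σ : R →+* R}

def IsSpannedByIterates (R : Type*) [Semiring R] [Module R M] (f : M → M) (u : M) : Prop :=
  u ∈ span R (range fun k : ℕ => f^[k + 1] u)

theorem isSpannedByIterates_subtype_iff {A : Submodule R M} {g : A → A} {f : M → M}
    (hfg : ∀ a, (g a : M) = f a) (a : A) :
    IsSpannedByIterates R f a ↔ IsSpannedByIterates R g a := by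
  have hsemi : ∀ k, (g^[k] a : M) = f^[k] a := fun k =>
    Function.Semiconj.iterate_right (f := Subtype.val) hfg k a
  rw [IsSpannedByIterates, IsSpannedByIterates,
    ← apply_mem_span_image_iff_mem_span A.injective_subtype, ← range_comp]
  simp only [Function.comp_def, subtype_apply, hsemi]

theorem span_range_iterate_le_comap (φ : M →ₛₗ[σ] M) (u : M) :
    span R (range fun k => φ^[k] u) ≤ (span R (range fun k => φ^[k] u)).comap φ :=
  span_le.mpr <| by
    rintro _ ⟨k, rfl⟩
    exact subset_span ⟨k + 1, Function.iterate_succ_apply' φ k u⟩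

theorem IsSpannedByIterates.span_range_iterate_le_span_image (φ : M →ₛₗ[σ] M) {u : M}
    (hu : IsSpannedByIterates R φ u) :
    span R (range fun k => φ^[k] u) ≤ span R (φ '' span R (range fun k => φ^[k] u)) := by
  have hsucc : ∀ k, φ^[k + 1] u ∈ φ '' span R (range fun k => φ^[k] u) := fun k =>
    ⟨φ^[k] u, subset_span ⟨k, rfl⟩, (Function.iterate_succ_apply' φ k u).symm⟩
  refine span_le.mpr ?_
  rintro _ ⟨_ | k, rfl⟩
  · exact span_le.mpr (range_subset_iff.mpr fun k => subset_span (hsucc k)) hu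
  · exact subset_span (hsucc k)

theorem span_range_iterate_eq_of_iterate_mem (φ : M →ₛₗ[σ] M) {u : M} {n : ℕ}
    (hn : φ^[n] u ∈ span R ((fun k => φ^[k] u) '' Iio n)) :
    span R (range fun k => φ^[k] u) = span R ((fun k => φ^[k] u) '' Iio n) := by
  set S := span R ((fun k => φ^[k] u) '' Iio n)
  have hS : S ≤ S.comap φ := span_le.mpr <| by
    rintro _ ⟨k, hk, rfl⟩
    show φ (φ^[k] u) ∈ S
    rw [← Function.iterate_succ_apply' φ k u]
    rcases (Nat.succ_le_of_lt hk).lt_or_eq with hlt | rfl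
    · exact subset_span ⟨k + 1, hlt, rfl⟩
    · exact hn
  refine le_antisymm (span_le.mpr ?_) (span_mono (image_subset_range _ _))
  rintro _ ⟨k, rfl⟩
  induction k with
  | zero =>
    rcases n.eq_zero_or_pos with rfl | hpos
    · exact hn
    · exact subset_span ⟨0, hpos, rfl⟩
  | succ k ih =>
    show φ^[k + 1] u ∈ S
    rw [Function.iterate_succ_apply']
    exact hS ih

end Semiring

theorem finrank_le_of_span_range_eq_top {K K' V W : Type*} [Field K] [Field K'] [AddCommGroup V]
    [Module K V] [FiniteDimensional K V] [AddCommGroup W] [Module K' W] {τ : K →+* K'}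
    (φ : V →ₛₗ[τ] W) (hφ : span K' (range φ) = ⊤) : Module.finrank K' W ≤ Module.finrank K V := by
  let b := Module.finBasis K V
  have hrange : range φ ⊆ span K' (range (φ ∘ b)) := by
    have : (⊤ : Submodule K V) ≤ (span K' (range (φ ∘ b))).comap φ := by
      rw [← b.span_eq, span_le]
      rintro _ ⟨i, rfl⟩
      exact subset_span ⟨i, rfl⟩
    rintro _ ⟨v, rfl⟩
    exact this trivial
  have htop : span K' (range (φ ∘ b)) = ⊤ := eq_top_iff.mpr (hφ ▸ span_le.mpr hrange)
  calc Module.finrank K' W = (range (φ ∘ b)).finrank K' := by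
        rw [Set.finrank, htop, finrank_top]
    _ ≤ Fintype.card (Fin (Module.finrank K V)) := finrank_range_le_card _
    _ = Module.finrank K V := Fintype.card_fin _

section Field

variable {F V : Type*} [Field F] [AddCommGroup V] [Module F V] {σ : F →+* F}

theorem isSpannedByIterates_of_span_range_eq_top [FiniteDimensional F V] (φ : V →ₛₗ[σ] V)
    (hφ : span F (range φ) = ⊤) (w : V) : IsSpannedByIterates F φ w := by
  set Z := span F (range fun k : ℕ => φ^[k + 1] w)
  set K := Z.comap φ
  have hZK : Z ≤ K := span_le.mpr <| by
    rintro _ ⟨k, rfl⟩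
    exact subset_span ⟨k + 1, Function.iterate_succ_apply' φ (k + 1) w⟩
  have hwK : w ∈ K := subset_span ⟨0, rfl⟩
  have hquot : span F (range (K.mapQ Z φ le_rfl)) = ⊤ := by
    rw [eq_top_iff, ← Z.range_mkQ, LinearMap.range_eq_map, ← hφ, map_span]
    refine span_mono ?_
    rintro _ ⟨_, ⟨v, rfl⟩, rfl⟩
    exact ⟨K.mkQ v, rfl⟩
  have hdim := finrank_le_of_span_range_eq_top _ hquot
  have hK := K.finrank_quotient_add_finrank
  have hZ := Z.finrank_quotient_add_finrank
  show w ∈ Z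
  rwa [eq_of_le_of_finrank_le hZK (by omega)]

theorem isSpannedByIterates_of_le_span_image (φ : V →ₛₗ[σ] V) {W : Submodule F V}
    [FiniteDimensional F W] (hWφ : W ≤ W.comap φ) (hW : W ≤ span F (φ '' W)) {w : V}
    (hw : w ∈ W) : IsSpannedByIterates F φ w := by
  let ψ : W →ₛₗ[σ] W := (φ.domRestrict W).codRestrict W fun a => hWφ a.2
  have hψ : span F (range ψ) = ⊤ := by
    refine eq_top_iff.mpr fun a _ => ?_
    have himage : range (W.subtype ∘ ψ) = φ '' W := by
      ext x
      constructor
      · rintro ⟨a, rfl⟩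
        exact ⟨a, a.2, rfl⟩
      · rintro ⟨a, ha, rfl⟩
        exact ⟨⟨a, ha⟩, rfl⟩
    rw [← apply_mem_span_image_iff_mem_span W.injective_subtype, ← range_comp, himage]
    exact hW a.2
  exact (isSpannedByIterates_subtype_iff (g := ψ) (fun _ => rfl) ⟨w, hw⟩).2
    (isSpannedByIterates_of_span_range_eq_top ψ hψ _)

theorem IsSpannedByIterates.exists_iterate_mem_span {f : V → V} {u : V}
    (hu : IsSpannedByIterates F f u) : ∃ n, f^[n] u ∈ span F ((fun k => f^[k] u) '' Iio n) := by
  classical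
  set g : ℕ → V := fun k => f^[k + 1] u
  have hex : ∃ n, u ∈ span F (g '' Iio n) := by
    have hunion : range g = ⋃ n, g '' Iio n := by
      ext; simp only [mem_range, mem_iUnion, mem_image, mem_Iio]
      exact ⟨fun ⟨k, hk⟩ => ⟨k + 1, k, k.lt_succ_self, hk⟩, fun ⟨_, k, _, hk⟩ => ⟨k, hk⟩⟩
    rw [IsSpannedByIterates, hunion, span_iUnion] at hu
    exact (mem_iSup_of_directed _ (Monotone.directed_le fun m n h =>
      span_mono (image_mono (Iio_subset_Iio h)))).1 hu
  rcases hn : Nat.find hex with _ | m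
  · have hu0 := Nat.find_spec hex
    rw [hn, Iio_zero_eq_empty, image_empty, span_empty, mem_bot] at hu0
    exact ⟨0, by simp [hu0]⟩
  · -- `m + 1` is the least `n` with `u ∈ span {f u, …, f^[n] u}`, so by the exchange lemma
    -- `f^[m+1] u ∈ span {u, f u, …, f^[m] u}`.
    have hmem := Nat.find_spec hex
    have hnot := Nat.find_min hex (m := m) (by omega)
    rw [hn, ← Order.succ_eq_add_one, Order.Iio_succ_eq_insert, image_insert_eq] at hmem
    have hwindow : (fun k => f^[k] u) '' Iio (m + 1) = insert u (g '' Iio m) := by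
      ext v
      simp only [mem_image, mem_Iio, mem_insert_iff]
      constructor
      · rintro ⟨_ | k, hk, rfl⟩
        · exact Or.inl rfl
        · exact Or.inr ⟨k, by omega, rfl⟩
      · rintro (rfl | ⟨k, hk, rfl⟩)
        · exact ⟨0, by omega, rfl⟩
        · exact ⟨k + 1, by omega, rfl⟩
    exact ⟨m + 1, hwindow ▸ mem_span_insert_exchange hmem hnot⟩

theorem IsSpannedByIterates.fg_span_range_iterate (φ : V →ₛₗ[σ] V) {u : V}
    (hu : IsSpannedByIterates F φ u) : (span F (range fun k => φ^[k] u)).FG := by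
  obtain ⟨n, hn⟩ := hu.exists_iterate_mem_span
  rw [span_range_iterate_eq_of_iterate_mem φ hn]
  exact fg_span ((finite_Iio n).image _)

theorem IsSpannedByIterates.add (φ : V →ₛₗ[σ] V) {u v : V} (hu : IsSpannedByIterates F φ u)
    (hv : IsSpannedByIterates F φ v) : IsSpannedByIterates F φ (u + v) := by
  set U := span F (range fun k => φ^[k] u)
  set U' := span F (range fun k => φ^[k] v)
  have : FiniteDimensional F ↥(U ⊔ U') := (fg_iff_finiteDimensional _).mp
    ((hu.fg_span_range_iterate φ).sup (hv.fg_span_range_iterate φ))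
  have hleft : U ≤ U ⊔ U' := le_sup_left
  have hright : U' ≤ U ⊔ U' := le_sup_right
  refine isSpannedByIterates_of_le_span_image φ (W := U ⊔ U') ?_ ?_
    (add_mem (hleft (subset_span ⟨0, rfl⟩)) (hright (subset_span ⟨0, rfl⟩)))
  · exact sup_le ((span_range_iterate_le_comap φ u).trans (comap_mono hleft))
      ((span_range_iterate_le_comap φ v).trans (comap_mono hright))
  · exact sup_le ((hu.span_range_iterate_le_span_image φ).trans (span_mono (image_mono hleft)))
      ((hv.span_range_iterate_le_span_image φ).trans (span_mono (image_mono hright)))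

end Field

theorem adIter_eq_zero {L : Type*} [LieRing L] {z w : L} (h : ⁅z, w⁆ = 0) {n : ℕ} (hn : n ≠ 0) :
    adIter z n w = 0 := by
  obtain ⟨m, rfl⟩ := Nat.exists_eq_succ_of_ne_zero hn
  induction m with
  | zero => exact h
  | succ m ih => exact (congrArg _ (ih m.succ_ne_zero)).trans (lie_zero z)

theorem Polynomial.eq_zero_of_sum_X_pow_tmul_eq_zero {R M : Type*} [CommSemiring R]
    [AddCommMonoid M] [Module R M] {n : ℕ} {t : Fin n → M}
    (h : ∑ j : Fin n, (Polynomial.X ^ (j : ℕ) : Polynomial R) ⊗ₜ[R] t j = 0) (i : Fin n) :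
    t i = 0 := by
  classical
  have := congrArg ((TensorProduct.lid R M).toLinearMap ∘ₗ
    LinearMap.rTensor M (Polynomial.lcoeff R (i : ℕ))) h
  simpa [Polynomial.coeff_X_pow, Fin.val_eq_val] using this

theorem lie_eq_zero_of_mem_span {R L : Type*} [CommRing R] [LieRing L] [LieAlgebra R L]
    {s : Set L} (hs : ∀ a ∈ s, ∀ b ∈ s, ⁅a, b⁆ = 0) {a b : L} (ha : a ∈ span R s)
    (hb : b ∈ span R s) : ⁅a, b⁆ = 0 := by
  induction ha, hb using span_induction₂ with
  | mem_mem x y hx hy => exact hs x hx y hy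
  | zero_left => exact zero_lie _
  | zero_right => exact lie_zero _
  | add_left x y z _ _ _ hx hy => rw [add_lie, hx, hy, add_zero]
  | add_right x y z _ _ _ hy hz => rw [lie_add, hy, hz, add_zero]
  | smul_left r x y _ _ h => rw [smul_lie, h, smul_zero]
  | smul_right r x y _ _ h => rw [lie_smul, h, smul_zero]

section pSpan

variable {F : Type*} [Field F] {L : Type*} [LieRing L] [LieAlgebra F L] {pm : L → L}

theorem mem_pSpan_iff {S : Set L} {z : L} :
    z ∈ pSpan F pm S ↔ ∀ H : LieSubalgebra F L, IsPSubalgebra F pm H → S ⊆ H → z ∈ H := by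
  rw [pSpan, ← LieSubalgebra.mem_coe, LieSubalgebra.coe_sInf]
  simp only [mem_iInter, mem_ofPred_eq, SetLike.mem_coe, and_imp]

theorem isPSubalgebra_pSpan (S : Set L) : IsPSubalgebra F pm (pSpan F pm S) :=
  fun _ hx => mem_pSpan_iff.mpr fun H hH hS => hH _ (mem_pSpan_iff.mp hx H hH hS)

theorem subset_pSpan (S : Set L) : S ⊆ pSpan F pm S :=
  fun _ hx => mem_pSpan_iff.mpr fun _ _ hS => hS hx

end pSpan

namespace IsPMap

variable {p : ℕ} [Fact p.Prime] {F : Type*} [Field F] {L : Type*} [LieRing L] [LieAlgebra F L]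
  {pm : L → L}

theorem pm_lie_eq_zero (hpm : IsPMap p F L pm) {a b : L} (h : ⁅a, b⁆ = 0) : ⁅pm a, b⁆ = 0 := by
  rw [hpm.ad_pow]
  exact adIter_eq_zero h (Fact.out : p.Prime).ne_zero

theorem lie_pm_eq_zero (hpm : IsPMap p F L pm) {a b : L} (h : ⁅a, b⁆ = 0) : ⁅a, pm b⁆ = 0 := by
  rw [← lie_skew, hpm.pm_lie_eq_zero (by rw [← lie_skew, h, neg_zero]), neg_zero]

theorem iterate_lie_iterate_eq_zero (hpm : IsPMap p F L pm) {a b : L} (h : ⁅a, b⁆ = 0)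
    (i j : ℕ) : ⁅pm^[i] a, pm^[j] b⁆ = 0 := by
  induction i generalizing a with
  | zero =>
    induction j generalizing b with
    | zero => exact h
    | succ j ih => exact ih (hpm.lie_pm_eq_zero h)
  | succ i ih => exact ih (hpm.pm_lie_eq_zero h)

theorem map_zero (hpm : IsPMap p F L pm) : pm 0 = 0 := by
  simpa [zero_pow (Fact.out : p.Prime).ne_zero] using hpm.smul_pow 0 0

theorem map_add_of_lie_eq_zero [CharP F p] (hpm : IsPMap p F L pm) {a b : L} (h : ⁅a, b⁆ = 0) :
    pm (a + b) = pm a + pm b := by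
  obtain ⟨s, hs, hpm_add⟩ := hpm.add_pow a b
  have hvanish : adIter ((Polynomial.X : Polynomial F) ⊗ₜ[F] a + 1 ⊗ₜ[F] b) (p - 1)
      (1 ⊗ₜ[F] a) = 0 := by
    refine adIter_eq_zero ?_ (by have := (Fact.out : p.Prime).two_le; omega)
    rw [add_lie, LieAlgebra.ExtendScalars.bracket_tmul, LieAlgebra.ExtendScalars.bracket_tmul,
      lie_self, ← lie_skew, h, neg_zero, TensorProduct.tmul_zero, TensorProduct.tmul_zero, add_zero]
  rw [hvanish] at hs
  simp_rw [← TensorProduct.tmul_smul] at hs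
  have hs0 : ∀ j, s j = 0 := fun j => by
    have hj : ((j + 1 : ℕ) : F) ≠ 0 := by
      rw [ne_eq, CharP.cast_eq_zero_iff F p]
      exact Nat.not_dvd_of_pos_of_lt j.succ_pos (by omega)
    have := Polynomial.eq_zero_of_sum_X_pow_tmul_eq_zero hs.symm j
    rw [← Nat.cast_smul_eq_nsmul F] at this
    exact (smul_eq_zero.mp this).resolve_left hj
  simp [hpm_add, hs0]

theorem map_mem_span [CharP F p] (hpm : IsPMap p F L pm) {s : Set L}
    (hs : ∀ a ∈ s, ∀ b ∈ s, ⁅a, b⁆ = 0) (hgen : ∀ a ∈ s, pm a ∈ span F s) {a : L}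
    (ha : a ∈ span F s) : pm a ∈ span F s := by
  induction ha using span_induction with
  | mem a ha => exact hgen a ha
  | zero =>
    rw [hpm.map_zero]
    exact zero_mem _
  | add a b ha hb iha ihb =>
    rw [hpm.map_add_of_lie_eq_zero (lie_eq_zero_of_mem_span hs ha hb)]
    exact add_mem iha ihb
  | smul c a _ iha =>
    rw [hpm.smul_pow]
    exact smul_mem _ _ iha

def restrictSpan [CharP F p] (hpm : IsPMap p F L pm) {s : Set L}
    (hs : ∀ a ∈ s, ∀ b ∈ s, ⁅a, b⁆ = 0) (hgen : ∀ a ∈ s, pm a ∈ span F s) :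
    span F s →ₛₗ[frobenius F p] span F s where
  toFun a := ⟨pm a, hpm.map_mem_span hs hgen a.2⟩
  map_add' a b := Subtype.ext (hpm.map_add_of_lie_eq_zero (lie_eq_zero_of_mem_span hs a.2 b.2))
  map_smul' c a := Subtype.ext (hpm.smul_pow c a)

theorem isSemisimpleElt_iff [CharP F p] (hpm : IsPMap p F L pm) {z : L} :
    IsSemisimpleElt F pm z ↔ IsSpannedByIterates F pm z := by
  set s := range fun k : ℕ => pm^[k + 1] z
  constructor
  · intro hz
    have hs : ∀ a ∈ s, ∀ b ∈ s, ⁅a, b⁆ = 0 := by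
      rintro _ ⟨i, rfl⟩ _ ⟨j, rfl⟩
      exact hpm.iterate_lie_iterate_eq_zero (lie_self z) _ _
    let H : LieSubalgebra F L :=
      { span F s with
        lie_mem' := fun ha hb => by
          rw [lie_eq_zero_of_mem_span hs ha hb]
          exact (span F s).zero_mem }
    refine mem_pSpan_iff.mp hz H (fun a ha => hpm.map_mem_span hs ?_ ha) ?_
    · rintro _ ⟨k, rfl⟩
      exact subset_span ⟨k + 1, Function.iterate_succ_apply' pm (k + 1) z⟩
    · rintro _ rfl
      exact subset_span ⟨0, rfl⟩
  · refine fun hz => span_le.mpr ?_ hz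
    rintro _ ⟨k, rfl⟩
    induction k with
    | zero => exact subset_pSpan _ rfl
    | succ k ih =>
      show pm^[k + 1 + 1] z ∈ pSpan F pm {pm z}
      rw [Function.iterate_succ_apply']
      exact isPSubalgebra_pSpan _ _ ih

end IsPMap

/-- In a restricted Lie algebra, if `x, y` are semisimple and commute,
then `x + y` is semisimple. -/
theorem isSemisimpleElt_add (p : ℕ) [Fact p.Prime]
    (F : Type*) [Field F] [CharP F p]
    {L : Type*} [LieRing L] [LieAlgebra F L]
    (pm : L → L) (hpm : IsPMap p F L pm)
    {x y : L} (hx : IsSemisimpleElt F pm x) (hy : IsSemisimpleElt F pm y)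
    (hxy : ⁅x, y⁆ = 0) : IsSemisimpleElt F pm (x + y) := by
  rw [hpm.isSemisimpleElt_iff] at hx hy ⊢
  set s := (range fun k => pm^[k] x) ∪ range fun k => pm^[k] y
  have hs : ∀ a ∈ s, ∀ b ∈ s, ⁅a, b⁆ = 0 := by
    have hyx : ⁅y, x⁆ = 0 := by rw [← lie_skew, hxy, neg_zero]
    rintro _ (⟨i, rfl⟩ | ⟨i, rfl⟩) _ (⟨j, rfl⟩ | ⟨j, rfl⟩)
    · exact hpm.iterate_lie_iterate_eq_zero (lie_self x) i j
    · exact hpm.iterate_lie_iterate_eq_zero hxy i j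
    · exact hpm.iterate_lie_iterate_eq_zero hyx i j
    · exact hpm.iterate_lie_iterate_eq_zero (lie_self y) i j
  have hgen : ∀ a ∈ s, pm a ∈ span F s := by
    rintro _ (⟨k, rfl⟩ | ⟨k, rfl⟩)
    · exact subset_span (Or.inl ⟨k + 1, Function.iterate_succ_apply' pm k x⟩)
    · exact subset_span (Or.inr ⟨k + 1, Function.iterate_succ_apply' pm k y⟩)
  have hxs : x ∈ span F s := subset_span (Or.inl ⟨0, rfl⟩)
  have hys : y ∈ span F s := subset_span (Or.inr ⟨0, rfl⟩)
  have hφ : ∀ a : span F s,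
      IsSpannedByIterates F pm a ↔ IsSpannedByIterates F (hpm.restrictSpan hs hgen) a :=
    isSpannedByIterates_subtype_iff fun _ => rfl
  have hsum := ((hφ ⟨x, hxs⟩).1 hx).add (hpm.restrictSpan hs hgen) ((hφ ⟨y, hys⟩).1 hy)
  exact (hφ ⟨x + y, add_mem hxs hys⟩).2 hsum
end
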